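/- Let T be a bounded linear operator on a complex Hilbert space H, let 0 ≤ t ≤ 1, and set R = max{t, 1−t}. Then (1/2)‖T‖ + (1/(4R))·(2ω(T) − (ω((1−t)T* − tT) + ω((1−t)T + tT*))) ≤ ω(T). -/

import Mathlib

/-!
Write `T = ℜ T + i ℑ T` with `ℜ T`, `ℑ T` self-adjoint. For self-adjoint operators norm and
numerical radius agree, so `‖T‖ ≤ ω(ℜ T) + ω(ℑ T)`. Passing to the real or imaginary part does not
increase `ω`, and `(1 - t) T + t T*` has real part `ℜ T` while `(1 - t) T* - t T` has imaginary part
`-ℑ T`; hence `ω(ℜ T) + ω(ℑ T)` is at most both `2 ω(T)` and the sum of the two numerical radii in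
the statement. Since `R = max{t, 1 - t} ≥ 1/2`, the coefficient `1/(4R)` is at most `1/2`, and the
inequality follows.
-/

open ContinuousLinearMap

/-- The numerical radius of a bounded operator on a complex inner product space:
`ω(T) = sup { |⟨Tx, x⟩| : ‖x‖ = 1 }`. -/
noncomputable def numRadius {E : Type*} [NormedAddCommGroup E] [InnerProductSpace ℂ E]
    (T : E →L[ℂ] E) : ℝ :=
  ⨆ x : { x : E // ‖x‖ = 1 }, ‖(inner ℂ (T x) (x : E) : ℂ)‖

open scoped ComplexStarModule

section StarModule

variable {A : Type*} [AddCommGroup A] [Module ℂ A] [StarAddMonoid A] [StarModule ℂ A]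

theorem realPart_star (a : A) : ℜ (star a) = ℜ a := by
  ext
  simp [realPart_apply_coe, add_comm]

theorem imaginaryPart_star (a : A) : ℑ (star a) = -ℑ a := by
  ext
  simp [imaginaryPart_apply_coe, ← smul_neg]

theorem realPart_one_sub_smul_add_smul_star (a : A) (t : ℝ) :
    ℜ (((1 - t : ℝ) : ℂ) • a + ((t : ℝ) : ℂ) • star a) = ℜ a := by
  simp only [Complex.coe_smul, map_add, map_smul, realPart_star]
  rw [← add_smul, sub_add_cancel, one_smul]

theorem imaginaryPart_one_sub_smul_star_sub_smul (a : A) (t : ℝ) :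
    ℑ (((1 - t : ℝ) : ℂ) • star a - ((t : ℝ) : ℂ) • a) = -ℑ a := by
  simp only [Complex.coe_smul, map_sub, map_smul, imaginaryPart_star]
  rw [smul_neg, ← neg_smul, ← sub_smul]
  simp

end StarModule

section NumRadius

variable {E : Type*} [NormedAddCommGroup E] [InnerProductSpace ℂ E]

theorem numRadius_bddAbove (T : E →L[ℂ] E) :
    BddAbove (Set.range fun x : { x : E // ‖x‖ = 1 } => ‖(inner ℂ (T x) (x : E) : ℂ)‖) := by
  refine ⟨‖T‖, ?_⟩
  rintro r ⟨⟨x, hx⟩, rfl⟩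
  calc ‖(inner ℂ (T x) x : ℂ)‖ ≤ ‖T x‖ * ‖x‖ := norm_inner_le_norm _ _
    _ ≤ ‖T‖ * ‖x‖ * ‖x‖ := by gcongr; exact T.le_opNorm x
    _ = ‖T‖ := by rw [hx, mul_one, mul_one]

theorem numRadius_nonneg (T : E →L[ℂ] E) : 0 ≤ numRadius T :=
  Real.iSup_nonneg fun _ => norm_nonneg _

theorem norm_inner_apply_self_le_numRadius (T : E →L[ℂ] E) {x : E} (hx : ‖x‖ = 1) :
    ‖(inner ℂ (T x) x : ℂ)‖ ≤ numRadius T :=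
  le_ciSup (numRadius_bddAbove T) ⟨x, hx⟩

theorem norm_inner_apply_self_le_numRadius_mul_sq (T : E →L[ℂ] E) (x : E) :
    ‖(inner ℂ (T x) x : ℂ)‖ ≤ numRadius T * ‖x‖ ^ 2 := by
  rcases eq_or_ne x 0 with rfl | hx
  · simp
  set u : E := (‖x‖⁻¹ : ℂ) • x
  have hu : ‖u‖ = 1 := by simp [u, norm_smul, hx]
  have hxu : x = (‖x‖ : ℂ) • u := by simp [u, smul_smul, hx]
  calc ‖(inner ℂ (T x) x : ℂ)‖ = ‖(inner ℂ (T u) u : ℂ)‖ * ‖x‖ ^ 2 := by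
        rw [hxu, map_smul, inner_smul_left, inner_smul_right]
        simp [norm_smul, hu]
        ring
    _ ≤ numRadius T * ‖x‖ ^ 2 := by
        gcongr
        exact norm_inner_apply_self_le_numRadius T hu

theorem numRadius_le_numRadius {S T : E →L[ℂ] E}
    (h : ∀ x, ‖(inner ℂ (S x) x : ℂ)‖ ≤ ‖(inner ℂ (T x) x : ℂ)‖) :
    numRadius S ≤ numRadius T :=
  Real.iSup_le (fun x => (h x).trans (norm_inner_apply_self_le_numRadius T x.2))
    (numRadius_nonneg T)

theorem numRadius_neg (T : E →L[ℂ] E) : numRadius (-T) = numRadius T := by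
  simp [numRadius]

theorem norm_le_numRadius_of_isSymmetric {S : E →L[ℂ] E} (hS : (S : E →ₗ[ℂ] E).IsSymmetric) :
    ‖S‖ ≤ numRadius S := by
  rw [S.norm_eq_iSup_rayleighQuotient hS]
  refine ciSup_le fun x => ?_
  rcases eq_or_ne x 0 with rfl | hx
  · simpa using numRadius_nonneg S
  rw [rayleighQuotient, reApplyInnerSelf_apply, abs_div, abs_sq, div_le_iff₀ (by positivity)]
  exact (RCLike.abs_re_le_norm _).trans (norm_inner_apply_self_le_numRadius_mul_sq S x)

end NumRadius

section RealImaginaryPart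

variable {H : Type*} [NormedAddCommGroup H] [InnerProductSpace ℂ H] [CompleteSpace H]

theorem inner_adjoint_apply_self (T : H →L[ℂ] H) (x : H) :
    (inner ℂ (adjoint T x) x : ℂ) = starRingEnd ℂ (inner ℂ (T x) x) := by
  rw [adjoint_inner_left, inner_conj_symm]

theorem inner_realPart_apply_self (T : H →L[ℂ] H) (x : H) :
    (inner ℂ ((ℜ T : H →L[ℂ] H) x) x : ℂ) = (inner ℂ (T x) x : ℂ).re := by
  rw [realPart_apply_coe, star_eq_adjoint, ← Complex.coe_smul]
  simp only [smul_apply, add_apply, inner_smul_left, inner_add_left, inner_adjoint_apply_self,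
    Complex.add_conj, Complex.conj_ofReal]
  push_cast
  ring

-- The sign comes from `inner` being conjugate-linear in its first argument.
theorem inner_imaginaryPart_apply_self (T : H →L[ℂ] H) (x : H) :
    (inner ℂ ((ℑ T : H →L[ℂ] H) x) x : ℂ) = -(inner ℂ (T x) x : ℂ).im := by
  rw [imaginaryPart_apply_coe, star_eq_adjoint, ← Complex.coe_smul]
  simp only [smul_apply, sub_apply, inner_smul_left, inner_sub_left, inner_adjoint_apply_self,
    Complex.sub_conj, Complex.conj_ofReal, map_neg, Complex.conj_I]
  push_cast
  linear_combination ((inner ℂ (T x) x : ℂ).im : ℂ) * Complex.I_sq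

theorem numRadius_realPart_le (T : H →L[ℂ] H) : numRadius (ℜ T : H →L[ℂ] H) ≤ numRadius T :=
  numRadius_le_numRadius fun x => by
    rw [inner_realPart_apply_self, Complex.norm_real, Real.norm_eq_abs]
    exact Complex.abs_re_le_norm _

theorem numRadius_imaginaryPart_le (T : H →L[ℂ] H) :
    numRadius (ℑ T : H →L[ℂ] H) ≤ numRadius T :=
  numRadius_le_numRadius fun x => by
    rw [inner_imaginaryPart_apply_self, norm_neg, Complex.norm_real, Real.norm_eq_abs]
    exact Complex.abs_im_le_norm _

theorem norm_le_numRadius_realPart_add_numRadius_imaginaryPart (T : H →L[ℂ] H) :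
    ‖T‖ ≤ numRadius (ℜ T : H →L[ℂ] H) + numRadius (ℑ T : H →L[ℂ] H) := by
  have hsymm (S : selfAdjoint (H →L[ℂ] H)) : ((S : H →L[ℂ] H) : H →ₗ[ℂ] H).IsSymmetric :=
    isSelfAdjoint_iff_isSymmetric.mp S.2
  calc ‖T‖ = ‖(ℜ T : H →L[ℂ] H) + Complex.I • (ℑ T : H →L[ℂ] H)‖ := by
        rw [realPart_add_I_smul_imaginaryPart]
    _ ≤ ‖(ℜ T : H →L[ℂ] H)‖ + ‖(ℑ T : H →L[ℂ] H)‖ := by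
        grw [norm_add_le, norm_smul, Complex.norm_I, one_mul]
    _ ≤ _ := add_le_add (norm_le_numRadius_of_isSymmetric (hsymm _))
        (norm_le_numRadius_of_isSymmetric (hsymm _))

end RealImaginaryPart

theorem stmt_8_general {H : Type*} [NormedAddCommGroup H] [InnerProductSpace ℂ H] [CompleteSpace H]
    (T : H →L[ℂ] H) (t R : ℝ) (hR : R = max t (1 - t)) :
    (1 / 2 : ℝ) * ‖T‖ +
        (1 / (4 * R)) *
          (2 * numRadius T -
            (numRadius (((1 - t : ℝ) : ℂ) • adjoint T - ((t : ℝ) : ℂ) • T) +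
              numRadius (((1 - t : ℝ) : ℂ) • T + ((t : ℝ) : ℂ) • adjoint T))) ≤
      numRadius T := by
  set A := ((1 - t : ℝ) : ℂ) • adjoint T - ((t : ℝ) : ℂ) • T
  set B := ((1 - t : ℝ) : ℂ) • T + ((t : ℝ) : ℂ) • adjoint T
  set P := numRadius (ℜ T : H →L[ℂ] H)
  set Q := numRadius (ℑ T : H →L[ℂ] H)
  have hPB : P ≤ numRadius B := by
    have hReB : ℜ B = ℜ T := realPart_one_sub_smul_add_smul_star T t
    simpa only [hReB] using numRadius_realPart_le B
  have hQA : Q ≤ numRadius A := by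
    have hImA : ℑ A = -ℑ T := imaginaryPart_one_sub_smul_star_sub_smul T t
    simpa only [hImA, NegMemClass.coe_neg, numRadius_neg] using numRadius_imaginaryPart_le A
  have hPT := numRadius_realPart_le T
  have hQT := numRadius_imaginaryPart_le T
  have hR_half : 1 / 2 ≤ R := by
    rw [hR]; linarith [le_max_left t (1 - t), le_max_right t (1 - t)]
  have hcoeff : (1 / (4 * R)) * (2 * numRadius T - (numRadius A + numRadius B)) ≤
      (1 / 2) * (2 * numRadius T - (P + Q)) :=
    calc _ ≤ (1 / (4 * R)) * (2 * numRadius T - (P + Q)) := by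
          gcongr 1 / (4 * R) * (_ - ?_); linarith
      _ ≤ _ := by gcongr <;> linarith
  linarith [norm_le_numRadius_realPart_add_numRadius_imaginaryPart T]

/-- For `0 ≤ t ≤ 1` and `R = max{t, 1−t}`:
`(1/2)‖T‖ + (1/(4R))(2ω(T) − (ω((1−t)T* − tT) + ω((1−t)T + tT*))) ≤ ω(T)`. -/
theorem stmt_8 {H : Type*} [NormedAddCommGroup H] [InnerProductSpace ℂ H] [CompleteSpace H]
    (T : H →L[ℂ] H) (t R : ℝ) (ht0 : 0 ≤ t) (ht1 : t ≤ 1) (hR : R = max t (1 - t)) :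
    (1 / 2 : ℝ) * ‖T‖ +
        (1 / (4 * R)) *
          (2 * numRadius T -
            (numRadius (((1 - t : ℝ) : ℂ) • adjoint T - ((t : ℝ) : ℂ) • T) +
              numRadius (((1 - t : ℝ) : ℂ) • T + ((t : ℝ) : ℂ) • adjoint T))) ≤
      numRadius T :=
  stmt_8_general T t R hR
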